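/- arXiv:2006.04605 — 4 statements merged into one kernel-verified Lean document; each statement's English description precedes it below -/
import Mathlib

section
/- Let (U, 𝒜) be a partial Steiner triple system and let R be a finite subset of U. Then there is at most one subsystem (S, 𝒯) of (U, 𝒜) such that R ⊆ S and |S| ≤ 2|R|. -/
/-!
Fix a point `v` of a Steiner triple system `(V, B)` outside a subset `S` that is closed under
blocks. Sending `s ∈ S` to the third point of the block through `v` and `s` maps `S` injectively
into `V \ (S ∪ {v})`, so `2 |S| + 1 ≤ |V|` (the counting behind the Doyen–Wilson bound).
If `(S₁, T₁)` and `(S₂, T₂)` are subsystems containing `R`, then `S₁ ∩ S₂` is closed in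
`(S₁, T₁)` and contains `R`; with `|S₁| ≤ 2 |R|` it cannot be proper, so `S₁ ⊆ S₂`.
-/

/-- `(U, A)` is a finite partial Steiner triple system: every block is a
3-element subset of `U`, and every pair of distinct points lies in at most
one block. -/
def IsPSTS {α : Type*} (U : Finset α) (A : Finset (Finset α)) : Prop :=
  (∀ b ∈ A, b.card = 3 ∧ b ⊆ U) ∧
  ∀ b₁ ∈ A, ∀ b₂ ∈ A, ∀ x y : α, x ≠ y →
    x ∈ b₁ → y ∈ b₁ → x ∈ b₂ → y ∈ b₂ → b₁ = b₂

/-- `(V, B)` is a (complete) Steiner triple system. -/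
def IsSTS {α : Type*} (V : Finset α) (B : Finset (Finset α)) : Prop :=
  (∀ b ∈ B, b.card = 3 ∧ b ⊆ V) ∧
  ∀ x ∈ V, ∀ y ∈ V, x ≠ y → ∃! b, b ∈ B ∧ x ∈ b ∧ y ∈ b

/-- `(S, T)` is a subsystem of the partial Steiner triple system `(U, A)`. -/
def IsSubsystem {α : Type*} [DecidableEq α] (U : Finset α) (A : Finset (Finset α))
    (S : Finset α) (T : Finset (Finset α)) : Prop :=
  S ⊆ U ∧ T ⊆ A ∧
  (∀ b ∈ A, 2 ≤ (b ∩ S).card → b ∈ T ∧ b ⊆ S) ∧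
  IsSTS S T

namespace IsSTS

variable {α : Type*} [DecidableEq α] {V : Finset α} {B : Finset (Finset α)}

lemma exists_third_point (hV : IsSTS V B) {x y : α} (hx : x ∈ V) (hy : y ∈ V) (hxy : x ≠ y) :
    ∃ b ∈ B, x ∈ b ∧ y ∈ b ∧ ∃ z ∈ b, z ≠ x ∧ z ≠ y := by
  obtain ⟨b, ⟨hb, hxb, hyb⟩, -⟩ := hV.2 x hx y hy hxy
  have hcard : 1 < (b.erase x).card := by
    rw [Finset.card_erase_of_mem hxb, (hV.1 b hb).1]; norm_num
  obtain ⟨z, hz, hzy⟩ := Finset.exists_mem_ne hcard y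
  exact ⟨b, hb, hxb, hyb, z, Finset.mem_of_mem_erase hz, Finset.ne_of_mem_erase hz, hzy⟩

lemma two_mul_card_add_one_le (hV : IsSTS V B) {S : Finset α} (hSV : S ⊆ V)
    (hS : ∀ b ∈ B, 2 ≤ (b ∩ S).card → b ⊆ S) {v : α} (hv : v ∈ V) (hvS : v ∉ S) :
    2 * S.card + 1 ≤ V.card := by
  have hv_notMem_block : ∀ b ∈ B, ∀ s ∈ b, ∀ t ∈ b, s ≠ t → s ∈ S → t ∈ S → v ∉ b :=
    fun b hb s hsb t htb hst hs ht hvb => hvS <|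
      hS b hb (Finset.one_lt_card.2 ⟨s, Finset.mem_inter.2 ⟨hsb, hs⟩,
        t, Finset.mem_inter.2 ⟨htb, ht⟩, hst⟩) hvb
  have hthird : ∀ s ∈ S, ∃ t ∈ V \ insert v S, ∃ b ∈ B, v ∈ b ∧ s ∈ b ∧ t ∈ b := by
    intro s hs
    obtain ⟨b, hb, hvb, hsb, t, htb, htv, hts⟩ :=
      hV.exists_third_point hv (hSV hs) (fun h => hvS (h ▸ hs))
    refine ⟨t, Finset.mem_sdiff.2 ⟨(hV.1 b hb).2 htb, ?_⟩, b, hb, hvb, hsb, htb⟩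
    intro ht
    rcases Finset.mem_insert.1 ht with rfl | ht
    · exact htv rfl
    · exact hv_notMem_block b hb s hsb t htb (Ne.symm hts) hs ht hvb
  choose! f hfV b hb hvb hsb hfb using hthird
  have hinj : Set.InjOn f S := by
    intro s hs s' hs' hff
    have hfv : f s ≠ v := fun h =>
      (Finset.mem_sdiff.1 (hfV s hs)).2 (h ▸ Finset.mem_insert_self _ _)
    have hbb' : b s = b s' :=
      (hV.2 v hv (f s) (Finset.mem_sdiff.1 (hfV s hs)).1 hfv.symm).unique
        ⟨hb s hs, hvb s hs, hfb s hs⟩ ⟨hb s' hs', hvb s' hs', hff ▸ hfb s' hs'⟩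
    by_contra hss'
    exact hv_notMem_block (b s) (hb s hs) s (hsb s hs) s' (hbb' ▸ hsb s' hs') hss' hs hs' (hvb s hs)
  have hle := Finset.card_le_card_of_injOn f hfV hinj
  have hinsert : insert v S ⊆ V := Finset.insert_subset hv hSV
  have hcard := Finset.card_le_card hinsert
  rw [Finset.card_sdiff_of_subset hinsert] at hle
  rw [Finset.card_insert_of_notMem hvS] at hle hcard
  omega

end IsSTS

namespace IsSubsystem

variable {α : Type*} [DecidableEq α] {U : Finset α} {A : Finset (Finset α)}
  {S₁ S₂ : Finset α} {T₁ T₂ : Finset (Finset α)}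

lemma inter_closed (h₁ : IsSubsystem U A S₁ T₁) (h₂ : IsSubsystem U A S₂ T₂) :
    ∀ b ∈ T₁, 2 ≤ (b ∩ (S₁ ∩ S₂)).card → b ⊆ S₁ ∩ S₂ := by
  intro b hb hb2
  have hb2' : 2 ≤ (b ∩ S₂).card :=
    hb2.trans (Finset.card_le_card (Finset.inter_subset_inter_left Finset.inter_subset_right))
  exact Finset.subset_inter (h₁.2.2.2.1 b hb).2 (h₂.2.2.1 b (h₁.2.1 hb) hb2').2

lemma subset_of_card_le (h₁ : IsSubsystem U A S₁ T₁) (h₂ : IsSubsystem U A S₂ T₂)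
    {R : Finset α} (hR₁ : R ⊆ S₁) (hR₂ : R ⊆ S₂) (hc₁ : S₁.card ≤ 2 * R.card) : S₁ ⊆ S₂ := by
  by_contra hS
  obtain ⟨v, hv₁, hv₂⟩ := Finset.not_subset.1 hS
  have hbound := h₁.2.2.2.two_mul_card_add_one_le Finset.inter_subset_left
    (h₁.inter_closed h₂) hv₁ (fun h => hv₂ (Finset.mem_inter.1 h).2)
  have := Finset.card_le_card (Finset.subset_inter hR₁ hR₂)
  omega

lemma blocks_subset (h₁ : IsSubsystem U A S₁ T₁) (h₂ : IsSubsystem U A S₂ T₂)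
    (hS : S₁ ⊆ S₂) : T₁ ⊆ T₂ := by
  intro b hb
  obtain ⟨hb3, hbS⟩ := h₁.2.2.2.1 b hb
  have hb2 : 2 ≤ (b ∩ S₂).card := by
    rw [Finset.inter_eq_left.2 (hbS.trans hS), hb3]; norm_num
  exact (h₂.2.2.1 b (h₁.2.1 hb) hb2).1

end IsSubsystem

theorem stmt_3_general {α : Type*} [DecidableEq α] (U : Finset α) (A : Finset (Finset α))
    (R : Finset α)
    (S₁ S₂ : Finset α) (T₁ T₂ : Finset (Finset α))
    (h₁ : IsSubsystem U A S₁ T₁) (h₂ : IsSubsystem U A S₂ T₂)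
    (hR₁ : R ⊆ S₁) (hR₂ : R ⊆ S₂)
    (hc₁ : S₁.card ≤ 2 * R.card) (hc₂ : S₂.card ≤ 2 * R.card) :
    S₁ = S₂ ∧ T₁ = T₂ := by
  have hS : S₁ = S₂ := (h₁.subset_of_card_le h₂ hR₁ hR₂ hc₁).antisymm
    (h₂.subset_of_card_le h₁ hR₂ hR₁ hc₂)
  exact ⟨hS, (h₁.blocks_subset h₂ hS.le).antisymm (h₂.blocks_subset h₁ hS.ge)⟩

theorem stmt_3 {α : Type*} [DecidableEq α] (U : Finset α) (A : Finset (Finset α))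
    (hUA : IsPSTS U A) (R : Finset α) (hR : R ⊆ U)
    (S₁ S₂ : Finset α) (T₁ T₂ : Finset (Finset α))
    (h₁ : IsSubsystem U A S₁ T₁) (h₂ : IsSubsystem U A S₂ T₂)
    (hR₁ : R ⊆ S₁) (hR₂ : R ⊆ S₂)
    (hc₁ : S₁.card ≤ 2 * R.card) (hc₂ : S₂.card ≤ 2 * R.card) :
    S₁ = S₂ ∧ T₁ = T₂ :=
  stmt_3_general U A R S₁ S₂ T₁ T₂ h₁ h₂ hR₁ hR₂ hc₁ hc₂
end

section
/- Let n be an odd integer, n ≥ 3, and let {F_0, ..., F_{n-1}} be the standard 1-factorisation on (ℤ/nℤ) ∪ {∞}. Suppose S ⊆ (ℤ/nℤ) ∪ {∞} with |S| > 2 induces a sub-1-factorisation 𝓕' of {F_0, ..., F_{n-1}}. Then ∞ ∈ S, S \ {∞} is a coset C of a subgroup of ℤ/nℤ, and 𝓕' = {F'_i : i ∈ C} where F'_i = {{x, y} ∈ F_i : x, y ∈ S}. -/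
/-- The `i`-th 1-factor of the standard 1-factorisation on `(ℤ/nℤ) ∪ {∞}`,
where `∞` is represented by `none`. -/
def stdFactor (n : ℕ) (i : ZMod n) : Set (Sym2 (Option (ZMod n))) :=
  {e | ∃ x y : ZMod n, x ≠ y ∧ x + y = 2 * i ∧ e = s(some x, some y)} ∪
    {s(none, some i)}

private lemma std_none {n : ℕ} {i : ZMod n} {e : Sym2 (Option (ZMod n))}
    (he : e ∈ stdFactor n i) (h0 : (none : Option (ZMod n)) ∈ e) :
    e = s(none, some i) := by
  rcases he with ⟨x, y, _, _, rfl⟩ | he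
  · simp [Sym2.mem_iff] at h0
  · exact he

private lemma std_pair {n : ℕ} {i u v : ZMod n}
    (he : s(some u, some v) ∈ stdFactor n i) : u ≠ v ∧ u + v = 2 * i := by
  rcases he with ⟨x, y, hxy, hsum, hq⟩ | he
  · simp only [Sym2.eq_iff, Option.some.injEq] at hq
    rcases hq with ⟨rfl, rfl⟩ | ⟨rfl, rfl⟩
    · exact ⟨hxy, hsum⟩
    · exact ⟨Ne.symm hxy, by linear_combination hsum⟩
  · simp [Set.mem_singleton_iff, Sym2.eq_iff] at he

private lemma std_infty {n : ℕ} {i j : ZMod n}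
    (he : s(none, some j) ∈ stdFactor n i) : j = i := by
  rcases he with ⟨x, y, hxy, hsum, hq⟩ | he
  · exact absurd hq (by simp [Sym2.eq_iff])
  · rw [Set.mem_singleton_iff, Sym2.eq_iff] at he
    simpa using he

private lemma std_some {n : ℕ} {i x : ZMod n} {e : Sym2 (Option (ZMod n))}
    (he : e ∈ stdFactor n i) (hx : (some x : Option (ZMod n)) ∈ e) :
    e = s(none, some i) ∨ ∃ y, x ≠ y ∧ x + y = 2 * i ∧ e = s(some x, some y) := by
  rcases he with ⟨a, b, hab, hsum, rfl⟩ | he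
  · right
    rw [Sym2.mem_iff] at hx
    rcases hx with h | h
    · obtain rfl := Option.some.inj h
      exact ⟨b, hab, hsum, rfl⟩
    · obtain rfl := Option.some.inj h
      exact ⟨a, Ne.symm hab, by linear_combination hsum, Sym2.eq_swap⟩
  · left; exact he

theorem stmt_6 (n : ℕ) (hn : Odd n) (h3 : 3 ≤ n)
    (S : Set (Option (ZMod n))) (hScard : 2 < S.ncard)
    (F' : Set (Set (Sym2 (Option (ZMod n)))))
    (hne : F'.Nonempty)
    (hedges : ∀ G ∈ F', ∀ e ∈ G, ∀ v : Option (ZMod n), v ∈ e → v ∈ S)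
    (hmatch : ∀ G ∈ F', ∀ v ∈ S, ∃! e : Sym2 (Option (ZMod n)), e ∈ G ∧ v ∈ e)
    (hpart : ∀ u ∈ S, ∀ v ∈ S, u ≠ v → ∃! G, G ∈ F' ∧ s(u, v) ∈ G)
    (hsub : ∀ G ∈ F', ∃ i : ZMod n, G ⊆ stdFactor n i) :
    none ∈ S ∧
    ∃ (H : AddSubgroup (ZMod n)) (a : ZMod n),
      {x : ZMod n | some x ∈ S} = {x | ∃ h ∈ H, x = a + h} ∧
      F' = {G | ∃ h ∈ H,
        G = {e ∈ stdFactor n (a + h) | ∀ v : Option (ZMod n), v ∈ e → v ∈ S}} := by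
  have hnz : NeZero n := ⟨by omega⟩
  have h2u : IsUnit (2 : ZMod n) := by
    rw [show (2 : ZMod n) = ((2 : ℕ) : ZMod n) by norm_num, ZMod.isUnit_iff_coprime]
    rwa [Nat.coprime_two_left]
  have hcancel : ∀ x y : ZMod n, 2 * x = 2 * y → x = y := fun x y h =>
    h2u.mul_left_cancel h
  obtain ⟨u₀, hu₀, v₀, hv₀, w₀, hw₀, huv₀, huw₀, hvw₀⟩ :=
    (Set.two_lt_ncard (Set.toFinite S)).mp hScard
  -- Step 1 : ∞ ∈ S
  have hinf : none ∈ S := by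
    by_contra hni
    have key : ∀ u v : ZMod n, some u ∈ S → some v ∈ S → u ≠ v →
        ∃ i : ZMod n, 2 * i = u + v ∧ some i ∉ S ∧
          ∀ x : ZMod n, some x ∈ S → some (2 * i - x) ∈ S := by
      intro u v hu hv huv
      obtain ⟨G, ⟨hG, hGe⟩, -⟩ := hpart _ hu _ hv (by simpa using huv)
      obtain ⟨i, hGi⟩ := hsub G hG
      have hp := std_pair (hGi hGe)
      refine ⟨i, hp.2.symm, ?_, ?_⟩
      · intro hi
        obtain ⟨e, ⟨heG, hei⟩, -⟩ := hmatch G hG _ hi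
        rcases std_some (hGi heG) hei with rfl | ⟨y, hxy, hsum, rfl⟩
        · exact hni (hedges G hG _ heG none (by simp))
        · exact hxy (by linear_combination - hsum)
      · intro x hx
        obtain ⟨e, ⟨heG, hex⟩, -⟩ := hmatch G hG _ hx
        rcases std_some (hGi heG) hex with rfl | ⟨y, hxy, hsum, rfl⟩
        · exact absurd (hedges G hG _ heG none (by simp)) hni
        · have hy : 2 * i - x = y := by linear_combination -hsum
          rw [hy]
          exact hedges G hG _ heG (some y) (by simp)
    obtain ⟨a, rfl⟩ : ∃ a, u₀ = some a := by
      rcases u₀ with _ | a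
      · exact absurd hu₀ hni
      · exact ⟨a, rfl⟩
    obtain ⟨b, rfl⟩ : ∃ b, v₀ = some b := by
      rcases v₀ with _ | b
      · exact absurd hv₀ hni
      · exact ⟨b, rfl⟩
    obtain ⟨c, rfl⟩ : ∃ c, w₀ = some c := by
      rcases w₀ with _ | c
      · exact absurd hw₀ hni
      · exact ⟨c, rfl⟩
    have hab : a ≠ b := fun h => huv₀ (by rw [h])
    have hac : a ≠ c := fun h => huw₀ (by rw [h])
    have hbc : b ≠ c := fun h => hvw₀ (by rw [h])
    obtain ⟨i1, hi1, -, hcl1⟩ := key a b hu₀ hv₀ hab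
    have hp : some (2 * i1 - c) ∈ S := hcl1 c hw₀
    obtain ⟨i2, hi2, -, hcl2⟩ := key a c hu₀ hw₀ hac
    have hq : some (2 * i2 - b) ∈ S := hcl2 b hv₀
    have hpq : (2 * i1 - c) ≠ (2 * i2 - b) := by
      intro h
      exact hbc (hcancel b c (by linear_combination hi2 - hi1 + h))
    obtain ⟨i3, hi3, hi3n, -⟩ := key _ _ hp hq hpq
    have : i3 = a := hcancel _ _ (by linear_combination hi3 + hi1 + hi2)
    exact hi3n (this ▸ hu₀)
  -- With ∞ ∈ S, develop the structure of T = {x | some x ∈ S}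
  -- Every i with some i ∈ S has its factor in F'
  have facG : ∀ i : ZMod n, some i ∈ S →
      ∃ G ∈ F', G ⊆ stdFactor n i ∧ s(none, some i) ∈ G := by
    intro i hi
    obtain ⟨G, ⟨hG, hGe⟩, -⟩ := hpart none hinf _ hi (by simp)
    obtain ⟨j, hGj⟩ := hsub G hG
    obtain rfl := std_infty (hGj hGe)
    exact ⟨G, hG, hGj, hGe⟩
  -- reflection closure
  have R : ∀ i x : ZMod n, some i ∈ S → some x ∈ S → some (2 * i - x) ∈ S := by
    intro i x hi hx
    obtain ⟨G, hG, hGi, -⟩ := facG i hi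
    obtain ⟨e, ⟨heG, hex⟩, -⟩ := hmatch G hG _ hx
    rcases std_some (hGi heG) hex with rfl | ⟨y, hxy, hsum, rfl⟩
    · have hxi : x = i := by
        rw [Sym2.mem_iff] at hex
        rcases hex with h | h
        · exact absurd h (by simp)
        · exact Option.some.inj h
      rw [hxi, show 2 * i - i = i from by ring]
      exact hxi ▸ hx
    · have hy : 2 * i - x = y := by linear_combination -hsum
      rw [hy]
      exact hedges G hG _ heG (some y) (by simp)
  -- midpoint closure
  have M : ∀ u v : ZMod n, some u ∈ S → some v ∈ S → u ≠ v →
      ∃ i : ZMod n, some i ∈ S ∧ 2 * i = u + v := by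
    intro u v hu hv huv
    obtain ⟨G, ⟨hG, hGe⟩, -⟩ := hpart _ hu _ hv (by simpa using huv)
    obtain ⟨j, hGj⟩ := hsub G hG
    have hp := std_pair (hGj hGe)
    obtain ⟨e, ⟨heG, he0⟩, -⟩ := hmatch G hG none hinf
    obtain rfl := std_none (hGj heG) he0
    exact ⟨j, hedges G hG _ heG (some j) (by simp), hp.2.symm⟩
  -- affine closure
  have K : ∀ u v x : ZMod n, some u ∈ S → some v ∈ S → some x ∈ S →
      some (u + v - x) ∈ S := by
    intro u v x hu hv hx
    by_cases huv : u = v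
    · subst huv
      have := R u x hu hx
      rwa [show 2 * u - x = u + u - x by ring] at this
    · obtain ⟨i, hi, h2i⟩ := M u v hu hv huv
      have := R i x hi hx
      rwa [show 2 * i - x = u + v - x by linear_combination h2i] at this
  -- pick a base point a with some a ∈ S
  obtain ⟨a, ha⟩ : ∃ a : ZMod n, some a ∈ S := by
    rcases u₀ with _ | a
    · rcases v₀ with _ | b
      · exact absurd rfl huv₀
      · exact ⟨b, hv₀⟩
    · exact ⟨a, hu₀⟩
  refine ⟨hinf, ?_⟩
  refine ⟨{ carrier := {h : ZMod n | some (a + h) ∈ S}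
            zero_mem' := by simpa using ha
            add_mem' := by
              intro h1 h2 m1 m2
              have := K (a + h1) (a + h2) a m1 m2 ha
              simpa [show a + h1 + (a + h2) - a = a + (h1 + h2) by ring] using this
            neg_mem' := by
              intro h m
              have := K a a (a + h) ha ha m
              simpa [show a + a - (a + h) = a + -h by ring] using this }, a, ?_, ?_⟩
  · ext x
    simp only [Set.mem_setOf_eq]
    constructor
    · intro hx
      exact ⟨x - a, by simpa using hx, by ring⟩
    · rintro ⟨h, hh, rfl⟩
      exact hh
  · -- the family of factors
    have eqG : ∀ G ∈ F', ∀ j : ZMod n, G ⊆ stdFactor n j → s(none, some j) ∈ G →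
        G = {e ∈ stdFactor n j | ∀ v : Option (ZMod n), v ∈ e → v ∈ S} := by
      intro G hG j hGj hje
      ext e
      constructor
      · intro heG
        exact ⟨hGj heG, fun v hv => hedges G hG e heG v hv⟩
      · rintro ⟨hstd, hvS⟩
        rcases hstd with ⟨x, y, hxy, hsum, rfl⟩ | hstd
        · have hx : some x ∈ S := hvS (some x) (by simp)
          obtain ⟨f, ⟨hfG, hfx⟩, -⟩ := hmatch G hG _ hx
          rcases std_some (hGj hfG) hfx with rfl | ⟨y', hxy', hsum', rfl⟩
          · exfalso
            have : x = j := by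
              rw [Sym2.mem_iff] at hfx
              rcases hfx with h | h
              · exact absurd h (by simp)
              · exact Option.some.inj h
            subst this
            exact hxy (by linear_combination - hsum)
          · have : y' = y := by linear_combination hsum' - hsum
            subst this
            exact hfG
        · rw [Set.mem_singleton_iff] at hstd
          subst hstd
          exact hje
    ext G
    simp only [Set.mem_setOf_eq]
    constructor
    · intro hG
      obtain ⟨j, hGj⟩ := hsub G hG
      obtain ⟨e, ⟨heG, he0⟩, -⟩ := hmatch G hG none hinf
      obtain rfl := std_none (hGj heG) he0
      have hjS : some j ∈ S := hedges G hG _ heG (some j) (by simp)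
      refine ⟨j - a, by simpa using hjS, ?_⟩
      rw [show a + (j - a) = j by ring]
      exact eqG G hG j hGj heG
    · rintro ⟨h, hh, rfl⟩
      obtain ⟨G', hG', hG'i, hG'e⟩ := facG (a + h) hh
      rw [← eqG G' hG' (a + h) hG'i hG'e]
      exact hG'
end

section
/- Let u ≥ 11 be odd, let D_i = {d : 1 < d < u, d divides u, u/d ≡ 1 or 3 (mod 6), (2i - u + 2)/3 ≤ d ≤ 2i - u} for an integer i with (u+3)/2 ≤ i ≤ u - 3, and let r_i = (1/2)·Σ_{d ∈ D_i} (u/d - 1). Then r_i < u - i - 1. -/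
/-!
Every `d ∈ D_i` is odd, and `u / d` is `3` or at least `7`. The divisor with `u / d = 3`, if any,
contributes `2`. The remaining ones are odd numbers in `[a, b]`, where `a` is the least of them,
`b ≤ u / 7` and `b ≤ 2i - u ≤ 3a - 2`. Pairing `d` with `a + b - d` and using the convexity
of `x ↦ 1/x` bounds `∑ (u / d - 1)` over them by the trapezoid rule, which gives at most
`u - 3a - 3`; since `3a ≥ 2i + 2 - u`, the whole sum is `< 2 (u - i - 1)`.
-/

open Finset

lemma inv_add_inv_le_of_add_eq {a b x y : ℝ} (ha : 0 < a) (hax : a ≤ x) (hay : a ≤ y)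
    (hsum : x + y = a + b) : x⁻¹ + y⁻¹ ≤ a⁻¹ + b⁻¹ := by
  have hx : 0 < x := ha.trans_le hax
  have hy : 0 < y := ha.trans_le hay
  have hb : 0 < b := by linarith
  have hprod : a * b ≤ x * y := by nlinarith [mul_nonneg (sub_nonneg.2 hax) (sub_nonneg.2 hay)]
  rw [inv_add_inv hx.ne' hy.ne', inv_add_inv ha.ne' hb.ne', hsum]
  gcongr

lemma sum_range_inv_add_mul_le {a c : ℝ} (ha : 0 < a) (hc : 0 ≤ c) (n : ℕ) :
    ∑ j ∈ range (n + 1), (a + c * j)⁻¹ ≤ (n + 1) / 2 * (a⁻¹ + (a + c * n)⁻¹) := by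
  have hreflect :
      ∑ j ∈ range (n + 1), (a + c * (n - j : ℕ))⁻¹ = ∑ j ∈ range (n + 1), (a + c * j)⁻¹ := by
    simpa using sum_range_reflect (fun j : ℕ => (a + c * j)⁻¹) (n + 1)
  have hpair : ∀ j ∈ range (n + 1),
      (a + c * j)⁻¹ + (a + c * (n - j : ℕ))⁻¹ ≤ a⁻¹ + (a + c * n)⁻¹ := by
    intro j hj
    have hjn : j ≤ n := Nat.lt_succ_iff.mp (mem_range.mp hj)
    rw [Nat.cast_sub hjn]
    have : (j : ℝ) ≤ n := by exact_mod_cast hjn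
    apply inv_add_inv_le_of_add_eq ha <;> nlinarith [(Nat.cast_nonneg j : (0:ℝ) ≤ j)]
  have := sum_le_sum hpair
  rw [sum_add_distrib, hreflect, sum_const, card_range, nsmul_eq_mul] at this
  push_cast at this
  linarith

lemma sum_range_div_add_two_mul_sub_one_le (u a : ℝ) (n : ℕ) (ha : 3 ≤ a) (hn : n + 1 ≤ a)
    (hu : 7 * (a + 2 * n) ≤ u) :
    ∑ j ∈ range (n + 1), (u / (a + 2 * j) - 1) ≤ u - 3 * a - 3 := by
  have htrap := sum_range_inv_add_mul_le (by linarith : 0 < a) zero_le_two n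
  simp only [sum_sub_distrib, div_eq_mul_inv, ← mul_sum, sum_const, card_range, nsmul_eq_mul,
    mul_one]
  push_cast
  have hn0 : (0:ℝ) ≤ n := n.cast_nonneg
  have hu0 : 0 ≤ u := by linarith
  have hL : 0 < a + 2 * n := by linarith
  have key : u * ((n + 1) / 2 * (a⁻¹ + (a + 2 * n)⁻¹)) ≤ u - 3 * a - 3 + (n + 1) := by
    rw [inv_add_inv (by linarith) hL.ne', ← mul_div_assoc, ← mul_div_assoc,
      div_le_iff₀ (by positivity)]
    have hcoeff : 0 ≤ 2 * a ^ 2 + 2 * a * n - 2 * n ^ 2 - 2 * a - 2 * n := by nlinarith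
    nlinarith [mul_nonneg (by linarith : 0 ≤ a - 1 - n) hn0,
      mul_nonneg (by linarith : 0 ≤ a - 3) (by linarith : 0 ≤ a),
      mul_le_mul_of_nonneg_left hu hcoeff]
  nlinarith [mul_le_mul_of_nonneg_left htrap hu0]

lemma sum_le_sum_range_add_two_mul {s : Finset ℕ} {a b : ℕ} (f : ℕ → ℝ)
    (hs : ∀ d ∈ s, a ≤ d ∧ d ≤ b ∧ d % 2 = a % 2) (hf : ∀ j ≤ (b - a) / 2, 0 ≤ f (a + 2 * j)) :
    ∑ d ∈ s, f d ≤ ∑ j ∈ range ((b - a) / 2 + 1), f (a + 2 * j) := by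
  have hsub : s ⊆ (range ((b - a) / 2 + 1)).image (fun j => a + 2 * j) := by
    intro d hd
    obtain ⟨had, hdb, hpar⟩ := hs d hd
    exact mem_image.2 ⟨(d - a) / 2, mem_range.2 (by omega), by omega⟩
  calc ∑ d ∈ s, f d ≤ ∑ d ∈ (range ((b - a) / 2 + 1)).image (fun j => a + 2 * j), f d := by
        refine sum_le_sum_of_subset_of_nonneg hsub fun _ ht _ => ?_
        obtain ⟨j, hj, rfl⟩ := mem_image.1 ht
        exact hf j (Nat.lt_succ_iff.1 (mem_range.1 hj))
    _ = _ := sum_image fun _ _ _ _ h => by simpa using h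

lemma sum_filter_three_mul_eq_le (s : Finset ℕ) (u : ℕ) :
    ∑ d ∈ s with 3 * d = u, ((u : ℝ) / d - 1) ≤ 2 := by
  have hcard : #{d ∈ s | 3 * d = u} ≤ 1 :=
    card_le_one.2 fun d hd e he => by simp only [mem_filter] at hd he; omega
  calc ∑ d ∈ s with 3 * d = u, ((u : ℝ) / d - 1)
      ≤ ∑ d ∈ s with 3 * d = u, (2 : ℝ) := sum_le_sum fun d hd => by
        rw [← (mem_filter.1 hd).2]
        rcases d.eq_zero_or_pos with rfl | hd0
        · norm_num
        · push_cast; rw [mul_div_cancel_right₀ _ (by positivity)]; norm_num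
    _ = #{d ∈ s | 3 * d = u} * 2 := by rw [sum_const, nsmul_eq_mul]
    _ ≤ 2 := by
        have : (#{d ∈ s | 3 * d = u} : ℝ) ≤ 1 := by exact_mod_cast hcard
        linarith

lemma three_mul_eq_or_seven_mul_le {d u : ℕ} (hdu : d ∣ u) (hlt : d < u)
    (hmod : u / d % 6 = 1 ∨ u / d % 6 = 3) : 3 * d = u ∨ 7 * d ≤ u := by
  obtain ⟨e, rfl⟩ := hdu
  have hd : 0 < d := Nat.pos_of_ne_zero (by rintro rfl; simp at hlt)
  rw [Nat.mul_div_cancel_left e hd] at hmod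
  have he : e = 3 ∨ 7 ≤ e := by
    rcases Nat.lt_or_ge e 2 with h | h
    · interval_cases e <;> simp_all
    · omega
  rcases he with rfl | he
  · exact Or.inl (mul_comm _ _)
  · exact Or.inr (by rw [mul_comm d]; exact Nat.mul_le_mul_right d he)

lemma sum_div_sub_one_le_of_mem_Icc {s : Finset ℕ} {u a b : ℕ} (ha : 3 ≤ a) (hab : a ≤ b)
    (hba : b + 2 ≤ 3 * a) (hbu : 7 * b ≤ u) (hs : ∀ d ∈ s, a ≤ d ∧ d ≤ b ∧ d % 2 = a % 2) :
    ∑ d ∈ s, ((u : ℝ) / d - 1) ≤ u - 3 * a - 3 := by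
  have hnonneg : ∀ j ≤ (b - a) / 2, 0 ≤ (u : ℝ) / (a + 2 * j : ℕ) - 1 := fun j hj => by
    have hpos : (0 : ℝ) < (a + 2 * j : ℕ) := by exact_mod_cast (by omega : 0 < a + 2 * j)
    rw [sub_nonneg, one_le_div hpos]
    exact_mod_cast (by omega : a + 2 * j ≤ u)
  refine (sum_le_sum_range_add_two_mul (fun d => (u : ℝ) / d - 1) hs hnonneg).trans ?_
  push_cast
  exact sum_range_div_add_two_mul_sub_one_le u a _ (by exact_mod_cast ha)
    (by exact_mod_cast (by omega : (b - a) / 2 + 1 ≤ a))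
    (by exact_mod_cast (by omega : 7 * (a + 2 * ((b - a) / 2)) ≤ u))

theorem stmt_11_general (u i : ℕ) (hu : Odd u)
    (hi1 : u + 3 ≤ 2 * i) (hi2 : i ≤ u - 3) :
    (∑ d ∈ (Finset.range u).filter
        (fun d => 1 < d ∧ d ∣ u ∧ (u / d % 6 = 1 ∨ u / d % 6 = 3) ∧
          2 * i + 2 ≤ 3 * d + u ∧ d + u ≤ 2 * i),
      ((u : ℝ) / d - 1)) / 2 < (u : ℝ) - i - 1 := by
  set D := (Finset.range u).filter
    (fun d => 1 < d ∧ d ∣ u ∧ (u / d % 6 = 1 ∨ u / d % 6 = 3) ∧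
      2 * i + 2 ≤ 3 * d + u ∧ d + u ≤ 2 * i)
  have hiu : (i : ℝ) + 3 ≤ u := by exact_mod_cast (by omega : i + 3 ≤ u)
  rw [← sum_filter_add_sum_filter_not D (fun d => 3 * d = u)]
  have hthree := sum_filter_three_mul_eq_le D u
  set B := D.filter (fun d => ¬ 3 * d = u)
  rcases B.eq_empty_or_nonempty with hB | hB
  · rw [hB, sum_empty]; linarith
  have hmemB : ∀ d ∈ B, 1 < d ∧ d % 2 = 1 ∧ 7 * d ≤ u ∧ 2 * i + 2 ≤ 3 * d + u ∧ d + u ≤ 2 * i := by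
    intro d hd
    simp only [B, D, mem_filter, mem_range] at hd
    obtain ⟨⟨hdu, hd1, hdvd, hmod, hlo, hhi⟩, h3⟩ := hd
    exact ⟨hd1, Nat.odd_iff.1 (hu.of_dvd_nat hdvd),
      (three_mul_eq_or_seven_mul_le hdvd hdu hmod).resolve_left h3, hlo, hhi⟩
  obtain ⟨ha1, hodd, -, hia, -⟩ := hmemB _ (B.min'_mem hB)
  obtain ⟨-, -, hbu, -, hib⟩ := hmemB _ (B.max'_mem hB)
  have hsumB := sum_div_sub_one_le_of_mem_Icc (u := u) (by omega)
    (B.min'_le _ (B.max'_mem hB)) (by omega) hbu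
    fun d hd => ⟨B.min'_le d hd, B.le_max' d hd, by rw [(hmemB d hd).2.1, hodd]⟩
  have hiaR : (2 * i + 2 : ℝ) ≤ 3 * B.min' hB + u := by exact_mod_cast hia
  linarith

theorem stmt_11 (u i : ℕ) (hu : Odd u) (hu11 : 11 ≤ u)
    (hi1 : u + 3 ≤ 2 * i) (hi2 : i ≤ u - 3) :
    (∑ d ∈ (Finset.range u).filter
        (fun d => 1 < d ∧ d ∣ u ∧ (u / d % 6 = 1 ∨ u / d % 6 = 3) ∧
          2 * i + 2 ≤ 3 * d + u ∧ d + u ≤ 2 * i),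
      ((u : ℝ) / d - 1)) / 2 < (u : ℝ) - i - 1 :=
  stmt_11_general u i hu hi1 hi2
end

section
/- Let u ≥ 11 be odd, u ≡ 3 (mod 6), and let i ≤ u - 3. The only cosets C of nontrivial proper subgroups of ℤ/uℤ with |C| ≡ 1 or 3 (mod 6) that fail to satisfy |C ∩ {0, ..., u-3}| ≥ (1/2)(|C| + 3) are the two cosets {u/3 - 2, 2u/3 - 2, u - 2} and {u/3 - 1, 2u/3 - 1, u - 1} of the subgroup ⟨u/3⟩ of order 3. -/
/-!
A coset `C` of `H` has `|H|` elements, and `|H|` is odd since it divides `u`. Only `u - 2` and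
`u - 1` lie outside `{0, …, u - 3}`, and they are consecutive, so a coset of a proper subgroup
contains at most one of them. Hence `|C ∩ {0, …, u - 3}|` is `|H|` or `|H| - 1`, and the inequality
`2 |C ∩ {0, …, u - 3}| < |H| + 3` holds exactly when `|H| = 3` and `C` contains `u - 2` or `u - 1`.
The subgroup of order `3` of `ℤ/3mℤ` is `{0, m, 2m}`, which pins down `C`.
-/

open Set

theorem Set.inter_pair_nonempty_iff {α : Type*} (s : Set α) (a b : α) :
    (s ∩ {a, b}).Nonempty ↔ a ∈ s ∨ b ∈ s := by
  simp only [Set.Nonempty, mem_inter_iff, mem_insert_iff, mem_singleton_iff, and_or_left,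
    exists_or, exists_eq_right]

theorem Set.ncard_insert_insert_singleton_le {α : Type*} (a b c : α) :
    ({a, b, c} : Set α).ncard ≤ 3 := by
  classical
  simpa using (ncard_coe_finset {a, b, c}).le.trans Finset.card_le_three

namespace AddSubgroup

variable {G : Type*} [AddGroup G]

theorem ncard_setOf_sub_mem (H : AddSubgroup G) (a : G) :
    {x | x - a ∈ H}.ncard = Nat.card H := by
  have : {x | x - a ∈ H} = (· + a) '' (H : Set G) := by
    ext x
    simp [← sub_eq_add_neg]
  rw [this, ncard_image_of_injective _ (add_left_injective a)]
  exact (Nat.card_coe_set_eq (H : Set G)).symm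

theorem card_nsmul_eq_zero {H : AddSubgroup G} {x : G} (hx : x ∈ H) : Nat.card H • x = 0 :=
  congrArg Subtype.val (card_nsmul_eq_zero' (x := (⟨x, hx⟩ : H)))

end AddSubgroup

namespace ZMod

theorem eq_top_of_one_mem {n : ℕ} {H : AddSubgroup (ZMod n)} (h : (1 : ZMod n) ∈ H) : H = ⊤ := by
  refine eq_top_iff.mpr fun x _ => ?_
  obtain ⟨k, rfl⟩ := ZMod.intCast_surjective x
  simpa using H.zsmul_mem h k

theorem compl_setOf_val_le_sub_three {n : ℕ} (hn : 3 ≤ n) :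
    {x : ZMod n | x.val ≤ n - 3}ᶜ = {((n - 2 : ℕ) : ZMod n), ((n - 1 : ℕ) : ZMod n)} := by
  have : NeZero n := ⟨by omega⟩
  ext x
  simp only [mem_compl_iff, mem_ofPred_eq, not_le, mem_insert_iff, mem_singleton_iff]
  constructor
  · intro hx
    have := ZMod.val_lt x
    rw [← ZMod.natCast_zmod_val x]
    rcases (by omega : x.val = n - 2 ∨ x.val = n - 1) with h | h <;> simp [h]
  · rintro (rfl | rfl) <;> rw [ZMod.val_cast_of_lt (by omega)] <;> omega

theorem ncard_setOf_sub_mem_inter_pair_le_one {n : ℕ} {H : AddSubgroup (ZMod n)} (hH : H ≠ ⊤)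
    (a : ZMod n) {x y : ZMod n} (hxy : x + 1 = y) : ({z | z - a ∈ H} ∩ {x, y}).ncard ≤ 1 := by
  have h_not_both : ¬ (x - a ∈ H ∧ y - a ∈ H) := fun ⟨hx, hy⟩ =>
    hH (eq_top_of_one_mem (by simpa [← hxy] using H.sub_mem hy hx))
  rw [ncard_le_one]
  rintro p ⟨hp, rfl | rfl⟩ q ⟨hq, rfl | rfl⟩ <;> first | rfl | exact absurd ⟨‹_›, ‹_›⟩ h_not_both

theorem eq_zero_or_eq_or_eq_of_three_mul_eq_zero {m : ℕ} [NeZero m] {y : ZMod (3 * m)}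
    (h : 3 * y = 0) : y = 0 ∨ y = m ∨ y = 2 * m := by
  obtain ⟨k, hk⟩ : m ∣ y.val := by
    have : ((3 * y.val : ℕ) : ZMod (3 * m)) = 0 := by push_cast; rwa [ZMod.natCast_zmod_val]
    rw [ZMod.natCast_eq_zero_iff] at this
    exact Nat.dvd_of_mul_dvd_mul_left three_pos this
  have hk3 : k < 3 := by
    have := ZMod.val_lt y
    by_contra! hk3
    nlinarith
  rw [← ZMod.natCast_zmod_val y, hk]
  interval_cases k <;> simp [mul_comm]

theorem setOf_sub_mem_eq_of_card_eq_three {m : ℕ} [NeZero m] {H : AddSubgroup (ZMod (3 * m))}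
    (hH : Nat.card H = 3) {a b : ZMod (3 * m)} (hb : b - a ∈ H) :
    {x | x - a ∈ H} = {b, b + m, b + 2 * m} := by
  refine eq_of_subset_of_ncard_le (fun x hx => ?_) ?_
  · have h3 := AddSubgroup.card_nsmul_eq_zero (by simpa using H.sub_mem hx hb : x - b ∈ H)
    rw [hH, nsmul_eq_mul, Nat.cast_ofNat] at h3
    have := eq_zero_or_eq_or_eq_of_three_mul_eq_zero h3
    simp only [sub_eq_iff_eq_add'] at this
    simpa using this
  · rw [AddSubgroup.ncard_setOf_sub_mem, hH]
    exact ncard_insert_insert_singleton_le _ _ _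

theorem natCast_sub_triple_eq {m c : ℕ} (hc : c ≤ m) :
    ({((3 * m - c : ℕ) : ZMod (3 * m)), ((3 * m - c : ℕ) : ZMod (3 * m)) + m,
        ((3 * m - c : ℕ) : ZMod (3 * m)) + 2 * m} : Set (ZMod (3 * m))) =
      {((m - c : ℕ) : ZMod (3 * m)), ((2 * m - c : ℕ) : ZMod (3 * m)),
        ((3 * m - c : ℕ) : ZMod (3 * m))} := by
  have h3 : ((3 * m : ℕ) : ZMod (3 * m)) = 0 := ZMod.natCast_self _
  push_cast [Nat.cast_sub hc, Nat.cast_sub (by omega : c ≤ 2 * m),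
    Nat.cast_sub (by omega : c ≤ 3 * m)] at h3 ⊢
  rw [h3, insert_comm, pair_comm]
  congr 2 <;> ring

theorem setOf_sub_mem_eq_iff {m c : ℕ} [NeZero m] (hc : c ≤ m) {H : AddSubgroup (ZMod (3 * m))}
    (hH : 3 ≤ Nat.card H) (a : ZMod (3 * m)) :
    {x | x - a ∈ H} = {((m - c : ℕ) : ZMod (3 * m)), ((2 * m - c : ℕ) : ZMod (3 * m)),
        ((3 * m - c : ℕ) : ZMod (3 * m))} ↔
      Nat.card H = 3 ∧ ((3 * m - c : ℕ) : ZMod (3 * m)) - a ∈ H := by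
  rw [← natCast_sub_triple_eq hc]
  constructor
  · intro h
    refine ⟨?_, (h ▸ mem_insert _ _ : _ ∈ {x | x - a ∈ H})⟩
    have := ncard_insert_insert_singleton_le (((3 * m - c : ℕ) : ZMod (3 * m)))
      (((3 * m - c : ℕ) : ZMod (3 * m)) + m) (((3 * m - c : ℕ) : ZMod (3 * m)) + 2 * m)
    rw [← h, AddSubgroup.ncard_setOf_sub_mem] at this
    omega
  · rintro ⟨h3, hb⟩
    exact setOf_sub_mem_eq_of_card_eq_three h3 hb

end ZMod

theorem stmt_13_general (u : ℕ) (hu11 : 11 ≤ u) (hu : u % 6 = 3)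
    (H : AddSubgroup (ZMod u)) (hbot : H ≠ ⊥) (htop : H ≠ ⊤)
    (a : ZMod u) :
    (2 * ({x : ZMod u | x - a ∈ H} ∩ {x : ZMod u | x.val ≤ u - 3}).ncard
        < Nat.card H + 3) ↔
      {x : ZMod u | x - a ∈ H} =
          ({((u / 3 - 2 : ℕ) : ZMod u), ((2 * (u / 3) - 2 : ℕ) : ZMod u),
            ((u - 2 : ℕ) : ZMod u)} : Set (ZMod u)) ∨
        {x : ZMod u | x - a ∈ H} =
          ({((u / 3 - 1 : ℕ) : ZMod u), ((2 * (u / 3) - 1 : ℕ) : ZMod u),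
            ((u - 1 : ℕ) : ZMod u)} : Set (ZMod u)) := by
  obtain ⟨m, rfl⟩ : ∃ m, u = 3 * m := ⟨u / 3, by omega⟩
  have : NeZero m := ⟨by omega⟩
  obtain ⟨k, hk⟩ : Odd (Nat.card H) :=
    (Nat.odd_iff.mpr (by omega : 3 * m % 2 = 1)).of_dvd_nat
      (by simpa using H.card_addSubgroup_dvd_card)
  have hcard : 3 ≤ Nat.card H := by
    have := AddSubgroup.card_eq_one.not.mpr hbot
    omega
  have hsplit := ncard_inter_add_ncard_sdiff_eq_ncard {x | x - a ∈ H}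
    {x : ZMod (3 * m) | x.val ≤ 3 * m - 3}
  rw [AddSubgroup.ncard_setOf_sub_mem, sdiff_eq, ZMod.compl_setOf_val_le_sub_three (by omega)]
    at hsplit
  have hpair := ZMod.ncard_setOf_sub_mem_inter_pair_le_one htop a
    (x := ((3 * m - 2 : ℕ) : ZMod (3 * m))) (y := ((3 * m - 1 : ℕ) : ZMod (3 * m)))
    (by rw [← Nat.cast_add_one]; congr 1; omega)
  have hpair_pos : 0 < ({x | x - a ∈ H} ∩
      {((3 * m - 2 : ℕ) : ZMod (3 * m)), ((3 * m - 1 : ℕ) : ZMod (3 * m))}).ncard ↔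
      ((3 * m - 2 : ℕ) : ZMod (3 * m)) - a ∈ H ∨ ((3 * m - 1 : ℕ) : ZMod (3 * m)) - a ∈ H :=
    (ncard_pos (toFinite _)).trans (inter_pair_nonempty_iff _ _ _)
  rw [Nat.mul_div_cancel_left m three_pos, ZMod.setOf_sub_mem_eq_iff (by omega) hcard,
    ZMod.setOf_sub_mem_eq_iff (by omega) hcard, ← and_or_left, ← hpair_pos]
  omega

theorem stmt_13 (u : ℕ) (hu11 : 11 ≤ u) (hu : u % 6 = 3)
    (H : AddSubgroup (ZMod u)) (hbot : H ≠ ⊥) (htop : H ≠ ⊤)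
    (hmod : Nat.card H % 6 = 1 ∨ Nat.card H % 6 = 3)
    (a : ZMod u) :
    (2 * ({x : ZMod u | x - a ∈ H} ∩ {x : ZMod u | x.val ≤ u - 3}).ncard
        < Nat.card H + 3) ↔
      {x : ZMod u | x - a ∈ H} =
          ({((u / 3 - 2 : ℕ) : ZMod u), ((2 * (u / 3) - 2 : ℕ) : ZMod u),
            ((u - 2 : ℕ) : ZMod u)} : Set (ZMod u)) ∨
        {x : ZMod u | x - a ∈ H} =
          ({((u / 3 - 1 : ℕ) : ZMod u), ((2 * (u / 3) - 1 : ℕ) : ZMod u),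
            ((u - 1 : ℕ) : ZMod u)} : Set (ZMod u)) :=
  stmt_13_general u hu11 hu H hbot htop a
end
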